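/- Let A = k[x] be the polynomial algebra with product x^m ∘ x^n := n·x^{m+n-1}. Then (A, ∘) is a Novikov algebra, and the map Δ: A → A⊗A defined by Δ(1) = Δ(x) = 0 and Δ(x^n) = −Σ_{i=1}^{n-1} i·x^{n-1-i}⊗x^{i-1} for n ≥ 2 satisfies the Novikov coalgebra axioms: (id⊗Δ)Δ − (τ⊗id)(id⊗Δ)Δ = (Δ⊗id)Δ − (τ⊗id)(Δ⊗id)Δ and (τ⊗id)(id⊗Δ)τΔ = (Δ⊗id)Δ. -/

import Mathlib

open scoped TensorProduct
open Polynomial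

def IsNovikov {A : Type*} [AddCommGroup A] (circ : A → A → A) : Prop :=
  (∀ a b c : A, circ (circ a b) c - circ a (circ b c) = circ (circ b a) c - circ b (circ a c)) ∧
  (∀ a b c : A, circ (circ a b) c = circ (circ a c) b)

def IsLieBr {A : Type*} [AddCommGroup A] (br : A → A → A) : Prop :=
  (∀ a b : A, br a b = - br b a) ∧
  (∀ a b c : A, br (br a b) c + br (br b c) a + br (br c a) b = 0)

def IsGD {A : Type*} [AddCommGroup A] (circ br : A → A → A) : Prop :=
  IsNovikov circ ∧ IsLieBr br ∧
  (∀ a b c : A, br (circ a b) c - br (circ a c) b + circ (br a b) c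
      - circ (br a c) b - circ a (br b c) = 0)

noncomputable def tau (k A : Type*) [Field k] [AddCommGroup A] [Module k A] :
    A ⊗[k] A →ₗ[k] A ⊗[k] A := (TensorProduct.comm k A A).toLinearMap

noncomputable def asr (k A : Type*) [Field k] [AddCommGroup A] [Module k A] :
    (A ⊗[k] A) ⊗[k] A →ₗ[k] A ⊗[k] (A ⊗[k] A) := (TensorProduct.assoc k A A A).toLinearMap

noncomputable def m12 (k A : Type*) [Field k] [AddCommGroup A] [Module k A] :
    A ⊗[k] (A ⊗[k] A) →ₗ[k] A ⊗[k] (A ⊗[k] A) :=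
  (asr k A) ∘ₗ (TensorProduct.map (tau k A) (LinearMap.id : A →ₗ[k] A)) ∘ₗ
    (TensorProduct.assoc k A A A).symm.toLinearMap

/-- The Novikov coalgebra axioms. -/
def IsNovikovCo {k A : Type*} [Field k] [AddCommGroup A] [Module k A]
    (Δ : A →ₗ[k] A ⊗[k] A) : Prop :=
  (∀ a : A,
    TensorProduct.map (LinearMap.id : A →ₗ[k] A) Δ (Δ a)
      - m12 k A (TensorProduct.map (LinearMap.id : A →ₗ[k] A) Δ (Δ a))
    = asr k A (TensorProduct.map Δ (LinearMap.id : A →ₗ[k] A) (Δ a))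
      - m12 k A (asr k A (TensorProduct.map Δ (LinearMap.id : A →ₗ[k] A) (Δ a)))) ∧
  (∀ a : A,
    m12 k A (TensorProduct.map (LinearMap.id : A →ₗ[k] A) Δ (tau k A (Δ a)))
    = asr k A (TensorProduct.map Δ (LinearMap.id : A →ₗ[k] A) (Δ a)))

/-- The Lie coalgebra axioms. -/
def IsLieCo {k A : Type*} [Field k] [AddCommGroup A] [Module k A]
    (δ : A →ₗ[k] A ⊗[k] A) : Prop :=
  (∀ a : A, δ a = - tau k A (δ a)) ∧
  (∀ a : A,
    TensorProduct.map (LinearMap.id : A →ₗ[k] A) δ (δ a)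
      - m12 k A (TensorProduct.map (LinearMap.id : A →ₗ[k] A) δ (δ a))
    = asr k A (TensorProduct.map δ (LinearMap.id : A →ₗ[k] A) (δ a)))

/-- The compatibility condition between the Novikov cooperation and the Lie cooperation
in a Gel'fand-Dorfman coalgebra. -/
def GDCoCompat {k A : Type*} [Field k] [AddCommGroup A] [Module k A]
    (Δ δ : A →ₗ[k] A ⊗[k] A) : Prop :=
  ∀ a : A,
    TensorProduct.map (LinearMap.id : A →ₗ[k] A) δ (Δ a)
      - m12 k A (TensorProduct.map (LinearMap.id : A →ₗ[k] A) Δ (δ a))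
      + m12 k A (TensorProduct.map (LinearMap.id : A →ₗ[k] A) δ (tau k A (Δ a)))
    = asr k A (TensorProduct.map Δ (LinearMap.id : A →ₗ[k] A) (δ a))
      + asr k A (TensorProduct.map δ (LinearMap.id : A →ₗ[k] A) (Δ a))

def IsGDCoalgebra {k A : Type*} [Field k] [AddCommGroup A] [Module k A]
    (Δ δ : A →ₗ[k] A ⊗[k] A) : Prop :=
  IsNovikovCo Δ ∧ IsLieCo δ ∧ GDCoCompat Δ δ
/-- The comultiplication `Δ(xⁿ) = -∑_{i=1}^{n-1} i · x^{n-1-i} ⊗ x^{i-1}` on `k[x]`. -/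
noncomputable def Delta17 (k : Type*) [Field k] :
    Polynomial k →ₗ[k] Polynomial k ⊗[k] Polynomial k :=
  (Polynomial.basisMonomials k).constr k fun n : ℕ =>
    - ∑ i ∈ Finset.Ioo 0 n, (i : k) • (((X : Polynomial k) ^ (n - 1 - i)) ⊗ₜ[k] ((X : Polynomial k) ^ (i - 1)))

/-!
The Novikov identities hold for `a ∘ b = a · D b` with `D` any derivation of a commutative
algebra.

For the coalgebra, write `Δ(x^(m+2)) = -∑_{a+b=m} (b+1) x^a ⊗ x^b`. Since `Δ(1) = Δ(x) = 0`, all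
composites vanish on `x^n` for `n < 4`, and on `x^(m+4)` each of `(id⊗Δ)Δ`, `(Δ⊗id)Δ` (reassociated)
and `(τ⊗id)(id⊗Δ)τΔ` is a sum `∑_{a+b+c=m} w(a,b,c) x^a ⊗ x^b ⊗ x^c` with weight
`(b+c+3)(c+1)`, `(b+1)(c+1)` and `(b+1)(c+1)` respectively. As `τ⊗id` exchanges `a` and `b`, the
first axiom reduces to `(b+c+3)(c+1) - (a+c+3)(c+1) = (b+1)(c+1) - (a+1)(c+1)`, and the second
is an equality of weights.
-/

open Finset

theorem X_pow_mul_derivative_X_pow {R : Type*} [CommSemiring R] (m n : ℕ) :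
    (X ^ m : R[X]) * derivative (X ^ n) = (n : R) • X ^ (m + n - 1) := by
  rcases n with _ | n
  · simp
  · rw [derivative_X_pow, smul_eq_C_mul, Nat.add_sub_cancel, ← add_assoc, Nat.add_sub_cancel]
    ring

theorem isNovikov_mul_derivation {R A : Type*} [CommRing R] [CommRing A] [Algebra R A]
    (D : Derivation R A A) : IsNovikov fun a b : A => a * D b := by
  refine ⟨fun a b c => ?_, fun a b c => ?_⟩ <;>
  · simp only [Derivation.leibniz, smul_eq_mul]
    ring

theorem Polynomial.lhom_ext_X_pow {R M : Type*} [CommSemiring R] [AddCommMonoid M] [Module R M]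
    {f g : R[X] →ₗ[R] M} (h : ∀ n, f (X ^ n) = g (X ^ n)) : f = g :=
  lhom_ext' fun n => LinearMap.ext_ring (by simpa [X_pow_eq_monomial] using h n)

section TripleSum
variable {M : Type*} [AddCommMonoid M]

def tripleSum (m : ℕ) (F : ℕ → ℕ → ℕ → M) : M :=
  ∑ p ∈ antidiagonal m, ∑ q ∈ antidiagonal p.2, F p.1 q.1 q.2

theorem tripleSum_eq_sum_antidiagonal_fst (m : ℕ) (F : ℕ → ℕ → ℕ → M) :
    tripleSum m F = ∑ p ∈ antidiagonal m, ∑ q ∈ antidiagonal p.1, F q.1 q.2 p.2 := by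
  rw [tripleSum, sum_sigma', sum_sigma']
  refine sum_nbij' (fun x => ⟨(x.1.1 + x.2.1, x.2.2), (x.1.1, x.2.1)⟩)
    (fun x => ⟨(x.2.1, x.2.2 + x.1.2), (x.2.2, x.1.2)⟩) ?_ ?_ ?_ ?_ ?_ <;>
  rintro ⟨⟨a, r⟩, ⟨b, c⟩⟩ h <;>
  simp only [mem_sigma, HasAntidiagonal.mem_antidiagonal, and_true, Sigma.mk.injEq, Prod.mk.injEq,
    heq_eq_eq] at h ⊢ <;>
  grind

theorem tripleSum_swap₁₂ (m : ℕ) (F : ℕ → ℕ → ℕ → M) :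
    tripleSum m (fun a b c => F b a c) = tripleSum m F := by
  rw [tripleSum_eq_sum_antidiagonal_fst, tripleSum_eq_sum_antidiagonal_fst]
  exact sum_congr rfl fun p _ => Nat.sum_antidiagonal_swap (f := fun q => F q.1 q.2 p.2)

theorem tripleSum_swap₂₃ (m : ℕ) (F : ℕ → ℕ → ℕ → M) :
    tripleSum m (fun a b c => F a c b) = tripleSum m F :=
  sum_congr rfl fun p _ => Nat.sum_antidiagonal_swap (f := fun q => F p.1 q.1 q.2)

theorem map_tripleSum {N G : Type*} [AddCommMonoid N] [FunLike G M N] [AddMonoidHomClass G M N]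
    (f : G) (m : ℕ) (F : ℕ → ℕ → ℕ → M) :
    f (tripleSum m F) = tripleSum m fun a b c => f (F a b c) := by
  simp only [tripleSum, map_sum]

theorem tripleSum_sub {M : Type*} [AddCommGroup M] (m : ℕ) (F G : ℕ → ℕ → ℕ → M) :
    tripleSum m F - tripleSum m G = tripleSum m fun a b c => F a b c - G a b c := by
  simp only [tripleSum, sum_sub_distrib]

end TripleSum

section TensorMaps
variable (k : Type*) [Field k] {A : Type*} [AddCommGroup A] [Module k A]

@[simp]
theorem tau_tmul (x y : A) : tau k A (x ⊗ₜ[k] y) = y ⊗ₜ[k] x := rfl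

@[simp]
theorem asr_tmul (x y z : A) : asr k A ((x ⊗ₜ[k] y) ⊗ₜ[k] z) = x ⊗ₜ[k] (y ⊗ₜ[k] z) := rfl

@[simp]
theorem m12_tmul (x y z : A) : m12 k A (x ⊗ₜ[k] (y ⊗ₜ[k] z)) = y ⊗ₜ[k] (x ⊗ₜ[k] z) := rfl

theorem m12_tripleSum_smul_X_pow (m : ℕ) (w : ℕ → ℕ → ℕ → k) :
    m12 k k[X] (tripleSum m fun a b c =>
        w a b c • ((X ^ a : k[X]) ⊗ₜ[k] ((X ^ b : k[X]) ⊗ₜ[k] (X ^ c : k[X])))) =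
      tripleSum m fun a b c => w b a c • ((X ^ a : k[X]) ⊗ₜ[k] ((X ^ b : k[X]) ⊗ₜ[k] (X ^ c : k[X]))) := by
  rw [map_tripleSum, ← tripleSum_swap₁₂]
  simp only [map_smul, m12_tmul]

end TensorMaps

section Delta17
variable (k : Type*) [Field k]

theorem Delta17_X_pow (n : ℕ) :
    Delta17 k (X ^ n) =
      -∑ i ∈ Ioo 0 n, (i : k) • ((X ^ (n - 1 - i) : k[X]) ⊗ₜ[k] (X ^ (i - 1) : k[X])) := by
  have : (X ^ n : k[X]) = basisMonomials k n := by simp [coe_basisMonomials, X_pow_eq_monomial]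
  rw [Delta17, this, Module.Basis.constr_basis]

theorem Delta17_X_pow_of_lt_two {n : ℕ} (hn : n < 2) : Delta17 k (X ^ n) = 0 := by
  rw [Delta17_X_pow, sum_eq_zero, neg_zero]
  intro i hi
  rw [mem_Ioo] at hi
  omega

@[simp]
theorem Delta17_one : Delta17 k 1 = 0 := by
  simpa using Delta17_X_pow_of_lt_two k (n := 0) (by norm_num)

@[simp]
theorem Delta17_X : Delta17 k X = 0 := by
  simpa using Delta17_X_pow_of_lt_two k (n := 1) (by norm_num)

/- The sign is kept in the coefficients: `neg_tmul` with a left factor in `k[X] ⊗ k[X]` produces a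
negation whose instances `map_neg` for `asr` does not match. -/
theorem Delta17_X_pow_add_two (m : ℕ) :
    Delta17 k (X ^ (m + 2)) =
      ∑ p ∈ antidiagonal m, (-((p.2 : k) + 1)) • ((X ^ p.1 : k[X]) ⊗ₜ[k] (X ^ p.2 : k[X])) := by
  rw [Delta17_X_pow, ← Ico_add_one_left_eq_Ioo, sum_Ico_eq_sum_range, ← Nat.sum_antidiagonal_swap,
    Nat.sum_antidiagonal_eq_sum_range_succ_mk, ← sum_neg_distrib]
  refine sum_congr rfl fun j hj => ?_
  rw [mem_range] at hj
  simp only [Prod.swap_prod_mk]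
  rw [show m + 2 - 1 - (0 + 1 + j) = m - j by omega, show 0 + 1 + j - 1 = j by omega]
  module

theorem map_id_Delta17_Delta17_X_pow_add_four (m : ℕ) :
    TensorProduct.map LinearMap.id (Delta17 k) (Delta17 k (X ^ (m + 4))) =
      tripleSum m fun a b c => (((b : k) + c + 3) * (c + 1)) •
        ((X ^ a : k[X]) ⊗ₜ[k] ((X ^ b : k[X]) ⊗ₜ[k] (X ^ c : k[X]))) := by
  rw [Delta17_X_pow_add_two, Nat.sum_antidiagonal_succ', Nat.sum_antidiagonal_succ']
  simp only [Nat.cast_zero, zero_add, pow_zero, Nat.cast_one, neg_add_rev, pow_one, Nat.cast_add,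
    map_add, map_smul, TensorProduct.map_tmul, LinearMap.id_coe, id_eq, Delta17_one,
    TensorProduct.tmul_zero, smul_zero, Delta17_X, map_sum, Delta17_X_pow_add_two,
    TensorProduct.tmul_sum, TensorProduct.tmul_smul, smul_sum, smul_smul]
  refine sum_congr rfl fun p _ => sum_congr rfl fun q hq => ?_
  rw [HasAntidiagonal.mem_antidiagonal] at hq
  rw [← hq]
  congr 1
  push_cast
  ring

theorem asr_map_Delta17_id_Delta17_X_pow_add_four (m : ℕ) :
    asr k k[X] (TensorProduct.map (Delta17 k) LinearMap.id (Delta17 k (X ^ (m + 4)))) =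
      tripleSum m fun a b c => (((b : k) + 1) * (c + 1)) •
        ((X ^ a : k[X]) ⊗ₜ[k] ((X ^ b : k[X]) ⊗ₜ[k] (X ^ c : k[X]))) := by
  rw [Delta17_X_pow_add_two, Nat.sum_antidiagonal_succ, Nat.sum_antidiagonal_succ]
  simp only [Nat.cast_add, Nat.cast_one, neg_add_rev, pow_zero, zero_add, pow_one, map_add,
    map_smul, TensorProduct.map_tmul, Delta17_one, LinearMap.id_coe, id_eq,
    TensorProduct.zero_tmul, smul_zero, Delta17_X, map_sum, Delta17_X_pow_add_two,
    TensorProduct.sum_tmul, ← TensorProduct.smul_tmul', smul_sum, smul_smul, asr_tmul]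
  rw [tripleSum_eq_sum_antidiagonal_fst]
  refine sum_congr rfl fun p _ => sum_congr rfl fun q _ => ?_
  congr 1
  ring

theorem m12_map_id_Delta17_tau_Delta17_X_pow_add_four (m : ℕ) :
    m12 k k[X] (TensorProduct.map LinearMap.id (Delta17 k) (tau k k[X] (Delta17 k (X ^ (m + 4))))) =
      tripleSum m fun a b c => (((b : k) + 1) * (c + 1)) •
        ((X ^ a : k[X]) ⊗ₜ[k] ((X ^ b : k[X]) ⊗ₜ[k] (X ^ c : k[X]))) := by
  rw [Delta17_X_pow_add_two, Nat.sum_antidiagonal_succ, Nat.sum_antidiagonal_succ]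
  simp only [Nat.cast_add, Nat.cast_one, neg_add_rev, pow_zero, zero_add, pow_one, map_add,
    map_smul, tau_tmul, map_sum, TensorProduct.map_tmul, LinearMap.id_coe, id_eq, Delta17_one,
    TensorProduct.tmul_zero, smul_zero, Delta17_X, Delta17_X_pow_add_two, TensorProduct.tmul_sum,
    TensorProduct.tmul_smul, smul_sum, smul_smul, m12_tmul]
  rw [← tripleSum_swap₂₃, tripleSum_eq_sum_antidiagonal_fst]
  refine sum_congr rfl fun p _ => sum_congr rfl fun q _ => ?_
  congr 1
  ring

theorem Delta17_novikovCo_left_X_pow (n : ℕ) :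
    TensorProduct.map LinearMap.id (Delta17 k) (Delta17 k (X ^ n))
        - m12 k k[X] (TensorProduct.map LinearMap.id (Delta17 k) (Delta17 k (X ^ n))) =
      asr k k[X] (TensorProduct.map (Delta17 k) LinearMap.id (Delta17 k (X ^ n)))
        - m12 k k[X] (asr k k[X] (TensorProduct.map (Delta17 k) LinearMap.id (Delta17 k (X ^ n)))) := by
  rcases n with _ | _ | _ | _ | m
  · simp
  · simp
  · rw [Delta17_X_pow_add_two]; simp
  · rw [Delta17_X_pow_add_two]; simp [Nat.antidiagonal_succ]
  · rw [map_id_Delta17_Delta17_X_pow_add_four, asr_map_Delta17_id_Delta17_X_pow_add_four,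
      m12_tripleSum_smul_X_pow, m12_tripleSum_smul_X_pow, tripleSum_sub, tripleSum_sub]
    congr 1
    funext a b c
    module

theorem Delta17_novikovCo_right_X_pow (n : ℕ) :
    m12 k k[X] (TensorProduct.map LinearMap.id (Delta17 k) (tau k k[X] (Delta17 k (X ^ n)))) =
      asr k k[X] (TensorProduct.map (Delta17 k) LinearMap.id (Delta17 k (X ^ n))) := by
  rcases n with _ | _ | _ | _ | m
  · simp
  · simp
  · rw [Delta17_X_pow_add_two]; simp
  · rw [Delta17_X_pow_add_two]; simp [Nat.antidiagonal_succ]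
  · rw [m12_map_id_Delta17_tau_Delta17_X_pow_add_four, asr_map_Delta17_id_Delta17_X_pow_add_four]

theorem isNovikovCo_Delta17 : IsNovikovCo (Delta17 k) := by
  let L := TensorProduct.map LinearMap.id (Delta17 k) ∘ₗ Delta17 k
  let R := asr k k[X] ∘ₗ TensorProduct.map (Delta17 k) LinearMap.id ∘ₗ Delta17 k
  have h₁ : L - m12 k k[X] ∘ₗ L = R - m12 k k[X] ∘ₗ R :=
    lhom_ext_X_pow fun n => Delta17_novikovCo_left_X_pow k n
  have h₂ : m12 k k[X] ∘ₗ TensorProduct.map LinearMap.id (Delta17 k) ∘ₗ tau k k[X] ∘ₗ Delta17 k = R :=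
    lhom_ext_X_pow fun n => Delta17_novikovCo_right_X_pow k n
  exact ⟨LinearMap.congr_fun h₁, LinearMap.congr_fun h₂⟩

end Delta17

theorem stmt17_general (k : Type*) [Field k] :
    (∀ m n : ℕ, ((X : Polynomial k) ^ m) * Polynomial.derivative ((X : Polynomial k) ^ n)
        = (n : k) • (X : Polynomial k) ^ (m + n - 1)) ∧
    (Delta17 k 1 = 0 ∧ Delta17 k (X : Polynomial k) = 0 ∧
      ∀ n : ℕ, 2 ≤ n → Delta17 k ((X : Polynomial k) ^ n)
        = - ∑ i ∈ Finset.Ioo 0 n,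
            (i : k) • (((X : Polynomial k) ^ (n - 1 - i)) ⊗ₜ[k] ((X : Polynomial k) ^ (i - 1)))) ∧
    IsNovikov (fun a b : Polynomial k => a * Polynomial.derivative b) ∧
    IsNovikovCo (Delta17 k) :=
  ⟨X_pow_mul_derivative_X_pow, ⟨Delta17_one k, Delta17_X k, fun n _ => Delta17_X_pow k n⟩,
    isNovikov_mul_derivation (derivative' : Derivation k k[X] k[X]), isNovikovCo_Delta17 k⟩

theorem stmt17 (k : Type*) [Field k] [CharZero k] :
    (∀ m n : ℕ, ((X : Polynomial k) ^ m) * Polynomial.derivative ((X : Polynomial k) ^ n)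
        = (n : k) • (X : Polynomial k) ^ (m + n - 1)) ∧
    (Delta17 k 1 = 0 ∧ Delta17 k (X : Polynomial k) = 0 ∧
      ∀ n : ℕ, 2 ≤ n → Delta17 k ((X : Polynomial k) ^ n)
        = - ∑ i ∈ Finset.Ioo 0 n,
            (i : k) • (((X : Polynomial k) ^ (n - 1 - i)) ⊗ₜ[k] ((X : Polynomial k) ^ (i - 1)))) ∧
    IsNovikov (fun a b : Polynomial k => a * Polynomial.derivative b) ∧
    IsNovikovCo (Delta17 k) :=
  stmt17_general k
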